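/- arXiv:1911.11540 — 6 statements merged into one kernel-verified Lean document; each statement's English description precedes it below -/
import Mathlib

section
/- For every σ² > 0, every a_k > 0 (k = 1..K) and every matrix V = (v_{f,k}) ∈ ℝ^{F×K} with v_{f,k} ≥ 0, there exists exactly one pair (r, r̃) ∈ (0,1]^F × (0,1]^K satisfying the fixed-point system: r_f = (1 + (1/σ²) Σ_{k=1}^K v_{f,k} a_k² r̃_k)^{-1} for each f = 1..F and r̃_k = (1 + (a_k²/σ²) Σ_{f=1}^F v_{f,k} r_f)^{-1} for each k = 1..K. -/
open MeasureTheory ProbabilityTheory Matrix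

/-- The fixed-point system associated with a nonnegative matrix `V`. -/
def IsFP {F K : ℕ} (σ2 : ℝ) (a : Fin K → ℝ) (V : Matrix (Fin F) (Fin K) ℝ)
    (r : Fin F → ℝ) (rt : Fin K → ℝ) : Prop :=
  (∀ f, r f = (1 + σ2⁻¹ * ∑ k, V f k * (a k) ^ 2 * rt k)⁻¹) ∧
  (∀ k, rt k = (1 + (a k) ^ 2 / σ2 * ∑ f, V f k * r f)⁻¹)

/-!
Both equations have the form `x = (1 + M y)⁻¹` (coordinatewise) with `M` entrywise nonnegative.
Eliminating `r̃` gives `r = Φ r` for a map `Φ` that is monotone (a composition of two antitone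
maps), sends `[0,1]^F` into `(0,1]^F`, and is strictly subhomogeneous: `Φ (α • r) < α • Φ r`
for `α > 1`, because `1 + α s < α (1 + s)`. Knaster–Tarski on `[0,1]^F` gives a fixed point.
If `r ≰ r'` were positive fixed points, let `α > 1` be the largest ratio `r f / r' f`, attained
at `f₀`; then `r f₀ = Φ r f₀ ≤ Φ (α • r') f₀ < α * Φ r' f₀ = α * r' f₀ = r f₀`.
-/

theorem exists_isFixedPt_mem_Icc {α : Type*} [ConditionallyCompleteLattice α] {a b : α}
    (hab : a ≤ b) {f : α → α} (hf : MonotoneOn f (Set.Icc a b))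
    (hmaps : Set.MapsTo f (Set.Icc a b) (Set.Icc a b)) :
    ∃ x ∈ Set.Icc a b, Function.IsFixedPt f x := by
  have : Fact (a ≤ b) := ⟨hab⟩
  let g : Set.Icc a b →o Set.Icc a b := ⟨hmaps.restrict, fun x y hxy => hf x.2 y.2 hxy⟩
  exact ⟨_, (OrderHom.lfp g).2, congrArg Subtype.val g.map_lfp⟩

theorem le_of_isFixedPt_of_lt_mul_smul {ι : Type*} [Fintype ι] {Φ : (ι → ℝ) → ι → ℝ}
    (hmono : ∀ ⦃x y⦄, 0 ≤ x → x ≤ y → Φ x ≤ Φ y)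
    (hsub : ∀ ⦃x⦄, 0 ≤ x → ∀ ⦃α : ℝ⦄, 1 < α → ∀ i, Φ (α • x) i < α * Φ x i)
    {x y : ι → ℝ} (hx : 0 ≤ x) (hy : ∀ i, 0 < y i)
    (hfx : Function.IsFixedPt Φ x) (hfy : Function.IsFixedPt Φ y) : x ≤ y := by
  by_contra hxy
  obtain ⟨i₁, hi₁⟩ : ∃ i, y i < x i := by simpa [Pi.le_def] using hxy
  obtain ⟨i₀, -, hi₀⟩ := Finset.exists_max_image Finset.univ (fun i => x i / y i)
    ⟨i₁, Finset.mem_univ _⟩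
  set α := x i₀ / y i₀
  have hxα : x ≤ α • y := fun i => by
    simpa [← div_le_iff₀ (hy i)] using hi₀ i (Finset.mem_univ i)
  have hα : 1 < α := ((one_lt_div (hy i₁)).2 hi₁).trans_le (hi₀ i₁ (Finset.mem_univ _))
  have : x i₀ < x i₀ := calc
    x i₀ = Φ x i₀ := by rw [hfx]
    _ ≤ Φ (α • y) i₀ := hmono hx hxα i₀
    _ < α * Φ y i₀ := hsub (fun i => (hy i).le) hα i₀
    _ = x i₀ := by rw [hfy]; exact div_mul_cancel₀ _ (hy i₀).ne'
  exact lt_irrefl _ this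

theorem eq_of_isFixedPt_of_lt_mul_smul {ι : Type*} [Fintype ι] {Φ : (ι → ℝ) → ι → ℝ}
    (hmono : ∀ ⦃x y⦄, 0 ≤ x → x ≤ y → Φ x ≤ Φ y)
    (hsub : ∀ ⦃x⦄, 0 ≤ x → ∀ ⦃α : ℝ⦄, 1 < α → ∀ i, Φ (α • x) i < α * Φ x i)
    {x y : ι → ℝ} (hx : ∀ i, 0 < x i) (hy : ∀ i, 0 < y i)
    (hfx : Function.IsFixedPt Φ x) (hfy : Function.IsFixedPt Φ y) : x = y :=
  le_antisymm (le_of_isFixedPt_of_lt_mul_smul hmono hsub (fun i => (hx i).le) hy hfx hfy)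
    (le_of_isFixedPt_of_lt_mul_smul hmono hsub (fun i => (hy i).le) hx hfy hfx)

section InvOneAdd

variable {m n : Type*} [Fintype n]

noncomputable def invOneAdd (M : Matrix m n ℝ) (x : n → ℝ) : m → ℝ :=
  fun i => (1 + (M *ᵥ x) i)⁻¹

variable {M : Matrix m n ℝ} {x y : n → ℝ}

theorem mulVec_nonneg (hM : ∀ i j, 0 ≤ M i j) (hx : 0 ≤ x) : 0 ≤ M *ᵥ x :=
  fun i => dotProduct_nonneg_of_nonneg (hM i) hx

theorem mulVec_le_mulVec (hM : ∀ i j, 0 ≤ M i j) (hxy : x ≤ y) : M *ᵥ x ≤ M *ᵥ y :=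
  fun i => dotProduct_le_dotProduct_of_nonneg_left hxy (hM i)

theorem one_le_one_add_mulVec (hM : ∀ i j, 0 ≤ M i j) (hx : 0 ≤ x) (i : m) :
    1 ≤ 1 + (M *ᵥ x) i :=
  le_add_of_nonneg_right (mulVec_nonneg hM hx i)

theorem invOneAdd_pos (hM : ∀ i j, 0 ≤ M i j) (hx : 0 ≤ x) (i : m) : 0 < invOneAdd M x i :=
  inv_pos.2 (zero_lt_one.trans_le (one_le_one_add_mulVec hM hx i))

theorem invOneAdd_nonneg (hM : ∀ i j, 0 ≤ M i j) (hx : 0 ≤ x) : 0 ≤ invOneAdd M x :=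
  fun i => (invOneAdd_pos hM hx i).le

theorem invOneAdd_mem_Ioc (hM : ∀ i j, 0 ≤ M i j) (hx : 0 ≤ x) (i : m) :
    invOneAdd M x i ∈ Set.Ioc 0 1 :=
  ⟨invOneAdd_pos hM hx i, inv_le_one_of_one_le₀ (one_le_one_add_mulVec hM hx i)⟩

theorem invOneAdd_anti (hM : ∀ i j, 0 ≤ M i j) (hx : 0 ≤ x) (hxy : x ≤ y) :
    invOneAdd M y ≤ invOneAdd M x := fun i =>
  inv_anti₀ (zero_lt_one.trans_le (one_le_one_add_mulVec hM hx i))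
    (add_le_add_right (mulVec_le_mulVec hM hxy i) 1)

theorem invOneAdd_lt_mul_smul (hM : ∀ i j, 0 ≤ M i j) (hx : 0 ≤ x) {α : ℝ} (hα : 1 < α)
    (i : m) : invOneAdd M x i < α * invOneAdd M (α • x) i := by
  have hs : 0 ≤ (M *ᵥ x) i := mulVec_nonneg hM hx i
  simp only [invOneAdd, mulVec_smul, Pi.smul_apply, smul_eq_mul]
  rw [← div_eq_mul_inv, inv_eq_one_div, div_lt_div_iff₀ (by positivity) (by positivity)]
  nlinarith

variable {l : Type*} [Fintype m] {N : Matrix l m ℝ}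

theorem invOneAdd_comp_mono (hN : ∀ i j, 0 ≤ N i j) (hM : ∀ i j, 0 ≤ M i j) (hx : 0 ≤ x)
    (hxy : x ≤ y) : invOneAdd N (invOneAdd M x) ≤ invOneAdd N (invOneAdd M y) :=
  invOneAdd_anti hN (invOneAdd_nonneg hM (hx.trans hxy)) (invOneAdd_anti hM hx hxy)

theorem invOneAdd_comp_lt_mul_smul (hN : ∀ i j, 0 ≤ N i j) (hM : ∀ i j, 0 ≤ M i j)
    (hx : 0 ≤ x) {α : ℝ} (hα : 1 < α) (i : l) :
    invOneAdd N (invOneAdd M (α • x)) i < α * invOneAdd N (invOneAdd M x) i := by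
  have hα₀ : 0 < α := zero_lt_one.trans hα
  have hz : 0 ≤ α⁻¹ • invOneAdd M x :=
    smul_nonneg (inv_nonneg.2 hα₀.le) (invOneAdd_nonneg hM hx)
  have hle : α⁻¹ • invOneAdd M x ≤ invOneAdd M (α • x) := fun j => by
    simpa [inv_mul_le_iff₀ hα₀] using (invOneAdd_lt_mul_smul hM hx hα j).le
  calc invOneAdd N (invOneAdd M (α • x)) i ≤ invOneAdd N (α⁻¹ • invOneAdd M x) i :=
        invOneAdd_anti hN hz hle i
    _ < α * invOneAdd N (α • α⁻¹ • invOneAdd M x) i := invOneAdd_lt_mul_smul hN hz hα i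
    _ = α * invOneAdd N (invOneAdd M x) i := by rw [smul_inv_smul₀ hα₀.ne']

end InvOneAdd

section FixedPointSystem

variable {F K : ℕ} (σ2 : ℝ) (a : Fin K → ℝ) (V : Matrix (Fin F) (Fin K) ℝ)

noncomputable def rMatrix : Matrix (Fin F) (Fin K) ℝ := of fun f k => σ2⁻¹ * (V f k * a k ^ 2)

noncomputable def rtMatrix : Matrix (Fin K) (Fin F) ℝ := of fun k f => a k ^ 2 / σ2 * V f k

theorem isFP_iff {r : Fin F → ℝ} {rt : Fin K → ℝ} :
    IsFP σ2 a V r rt ↔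
      r = invOneAdd (rMatrix σ2 a V) rt ∧ rt = invOneAdd (rtMatrix σ2 a V) r := by
  simp only [IsFP, funext_iff, invOneAdd, rMatrix, rtMatrix, mulVec, dotProduct, of_apply,
    Finset.mul_sum, mul_assoc]

variable {σ2 a V} (hσ : 0 < σ2) (hV : ∀ f k, 0 ≤ V f k)
include hσ hV

theorem rMatrix_nonneg : ∀ f k, 0 ≤ rMatrix σ2 a V f k := fun f k =>
  mul_nonneg (inv_nonneg.2 hσ.le) (mul_nonneg (hV f k) (sq_nonneg _))

theorem rtMatrix_nonneg : ∀ k f, 0 ≤ rtMatrix σ2 a V k f := fun k f =>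
  mul_nonneg (div_nonneg (sq_nonneg _) hσ.le) (hV f k)

end FixedPointSystem

theorem fixed_point_exists_unique_general
    (F K : ℕ) (σ2 : ℝ) (hσ : 0 < σ2)
    (a : Fin K → ℝ)
    (V : Matrix (Fin F) (Fin K) ℝ) (hV : ∀ f k, 0 ≤ V f k) :
    ∃! p : (Fin F → ℝ) × (Fin K → ℝ),
      (∀ f, p.1 f ∈ Set.Ioc (0 : ℝ) 1) ∧ (∀ k, p.2 k ∈ Set.Ioc (0 : ℝ) 1) ∧
        IsFP σ2 a V p.1 p.2 := by
  set C := rMatrix σ2 a V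
  set B := rtMatrix σ2 a V
  have hC : ∀ f k, 0 ≤ C f k := rMatrix_nonneg hσ hV
  have hB : ∀ k f, 0 ≤ B k f := rtMatrix_nonneg hσ hV
  obtain ⟨r, ⟨hr₀, -⟩, hr⟩ : ∃ r ∈ Set.Icc (0 : Fin F → ℝ) 1,
      Function.IsFixedPt (invOneAdd C ∘ invOneAdd B) r :=
    exists_isFixedPt_mem_Icc zero_le_one
      (fun x hx _ _ hxy => invOneAdd_comp_mono hC hB hx.1 hxy)
      (fun x hx => ⟨invOneAdd_nonneg hC (invOneAdd_nonneg hB hx.1),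
        fun f => (invOneAdd_mem_Ioc hC (invOneAdd_nonneg hB hx.1) f).2⟩)
  have hr_mem : ∀ f, r f ∈ Set.Ioc 0 1 := fun f => by
    rw [← hr]; exact invOneAdd_mem_Ioc hC (invOneAdd_nonneg hB hr₀) f
  refine ⟨(r, invOneAdd B r),
    ⟨hr_mem, invOneAdd_mem_Ioc hB hr₀, (isFP_iff σ2 a V).2 ⟨hr.symm, rfl⟩⟩, ?_⟩
  rintro ⟨r', rt'⟩ ⟨hr'_mem, -, hfp⟩
  obtain ⟨hr'_eq, hrt'_eq⟩ := (isFP_iff σ2 a V).1 hfp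
  have hr' : Function.IsFixedPt (invOneAdd C ∘ invOneAdd B) r' := by
    rw [Function.IsFixedPt, Function.comp_apply, ← hrt'_eq, ← hr'_eq]
  obtain rfl : r' = r := eq_of_isFixedPt_of_lt_mul_smul
    (fun _ _ hx hxy => invOneAdd_comp_mono hC hB hx hxy)
    (fun _ hx _ hα => invOneAdd_comp_lt_mul_smul hC hB hx hα)
    (fun f => (hr'_mem f).1) (fun f => (hr_mem f).1) hr' hr
  exact Prod.ext rfl hrt'_eq

/-- the fixed-point system has exactly one solution
`(r, r̃) ∈ (0,1]^F × (0,1]^K`. -/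
theorem fixed_point_exists_unique
    (F K : ℕ) (hF : 1 ≤ F) (hK : 1 ≤ K) (σ2 : ℝ) (hσ : 0 < σ2)
    (a : Fin K → ℝ) (ha : ∀ k, 0 < a k)
    (V : Matrix (Fin F) (Fin K) ℝ) (hV : ∀ f k, 0 ≤ V f k) :
    ∃! p : (Fin F → ℝ) × (Fin K → ℝ),
      (∀ f, p.1 f ∈ Set.Ioc (0 : ℝ) 1) ∧ (∀ k, p.2 k ∈ Set.Ioc (0 : ℝ) 1) ∧
        IsFP σ2 a V p.1 p.2 :=
  fixed_point_exists_unique_general F K σ2 hσ a V hV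
end

section
/- The equation r = (1 + (1/F) Σ_{k=1}^K P_k a_k²/(σ² + P_k a_k² r))^{-1} has exactly one solution r* in the interval (0,1]. -/
/-!
With `cᵢ = Pᵢ aᵢ²` and `s = F⁻¹`, multiplying the equation by its right-hand side turns it into
`Φ r = 1`, where `Φ r = r + s ∑ cᵢ r / (σ + cᵢ r)` is `fixedPointMap c σ s r`. Each summand is
increasing in `r ≥ 0`, so `Φ` is strictly increasing and continuous on `[0, ∞)`, with `Φ 0 = 0`
and `Φ 1 ≥ 1`; the intermediate value theorem gives a root in `(0, 1]`, and strict monotonicity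
makes it unique.
-/

open Finset Set

namespace ScalarFixedPoint

variable {ι : Type*} [Fintype ι] {c : ι → ℝ} {σ s : ℝ}

noncomputable def fixedPointMap (c : ι → ℝ) (σ s r : ℝ) : ℝ :=
  r + s * ∑ i, c i * r / (σ + c i * r)

lemma monotoneOn_mul_div_add {c : ℝ} (hσ : 0 < σ) (hc : 0 ≤ c) :
    MonotoneOn (fun r => c * r / (σ + c * r)) (Ici 0) := by
  intro x (hx : 0 ≤ x) y (hy : 0 ≤ y) hxy
  rw [div_le_div_iff₀ (by positivity) (by positivity)]
  nlinarith [mul_le_mul_of_nonneg_left hxy (mul_nonneg hc hσ.le)]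

lemma strictMonoOn_fixedPointMap (hσ : 0 < σ) (hc : ∀ i, 0 ≤ c i) (hs : 0 ≤ s) :
    StrictMonoOn (fixedPointMap c σ s) (Ici 0) :=
  strictMonoOn_id.add_monotone fun _ hx _ hy hxy =>
    mul_le_mul_of_nonneg_left
      (sum_le_sum fun i _ => monotoneOn_mul_div_add hσ (hc i) hx hy hxy) hs

lemma continuousOn_fixedPointMap (hσ : 0 < σ) (hc : ∀ i, 0 ≤ c i) :
    ContinuousOn (fixedPointMap c σ s) (Ici 0) := by
  unfold fixedPointMap
  fun_prop (disch := intro r (hr : 0 ≤ r); have := hc ‹_›; positivity)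

@[simp]
lemma fixedPointMap_zero : fixedPointMap c σ s 0 = 0 := by
  simp [fixedPointMap]

lemma one_le_one_add_mul_sum (hσ : 0 < σ) (hc : ∀ i, 0 ≤ c i) (hs : 0 ≤ s) {r : ℝ}
    (hr : 0 ≤ r) : 1 ≤ 1 + s * ∑ i, c i / (σ + c i * r) :=
  le_add_of_nonneg_right <| mul_nonneg hs <| sum_nonneg fun i _ =>
    div_nonneg (hc i) (by have := hc i; positivity)

lemma fixedPointMap_eq_mul (r : ℝ) :
    fixedPointMap c σ s r = r * (1 + s * ∑ i, c i / (σ + c i * r)) := by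
  simp only [fixedPointMap, mul_add, mul_one, mul_sum]
  congr 1
  exact sum_congr rfl fun i _ => by ring

lemma eq_inv_iff_fixedPointMap_eq_one (hσ : 0 < σ) (hc : ∀ i, 0 ≤ c i) (hs : 0 ≤ s)
    {r : ℝ} (hr : 0 ≤ r) :
    r = (1 + s * ∑ i, c i / (σ + c i * r))⁻¹ ↔ fixedPointMap c σ s r = 1 := by
  have hpos := (one_le_one_add_mul_sum hσ hc hs hr).trans_lt' one_pos
  rw [fixedPointMap_eq_mul, mul_eq_one_iff_eq_inv₀ hpos.ne']

theorem existsUnique_eq_inv_one_add_sum (hσ : 0 < σ) (hc : ∀ i, 0 ≤ c i) (hs : 0 ≤ s) :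
    ∃! r : ℝ, r ∈ Ioc (0 : ℝ) 1 ∧ r = (1 + s * ∑ i, c i / (σ + c i * r))⁻¹ := by
  obtain ⟨r, ⟨hr0, hr1⟩, hΦr⟩ : ∃ r ∈ Icc (0 : ℝ) 1, fixedPointMap c σ s r = 1 :=
    intermediate_value_Icc zero_le_one
      ((continuousOn_fixedPointMap hσ hc).mono Icc_subset_Ici_self)
      ⟨by simp, by
        simpa [fixedPointMap_eq_mul] using one_le_one_add_mul_sum hσ hc hs zero_le_one⟩
  have hr_pos : 0 < r := hr0.lt_of_ne fun h => by simp [← h] at hΦr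
  refine ⟨r, ⟨⟨hr_pos, hr1⟩, (eq_inv_iff_fixedPointMap_eq_one hσ hc hs hr0).2 hΦr⟩, ?_⟩
  rintro t ⟨ht, hteq⟩
  have hΦt := (eq_inv_iff_fixedPointMap_eq_one hσ hc hs ht.1.le).1 hteq
  exact (strictMonoOn_fixedPointMap hσ hc hs).injOn ht.1.le hr0 (hΦt.trans hΦr.symm)

end ScalarFixedPoint

theorem scalar_fixed_point_exists_unique_general
    (F K : ℕ) (σ2 : ℝ) (hσ : 0 < σ2)
    (a Pk : Fin K → ℝ) (hPk : ∀ k, 0 < Pk k) :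
    ∃! r : ℝ, r ∈ Set.Ioc (0 : ℝ) 1 ∧
      r = (1 + (F : ℝ)⁻¹ *
        ∑ k, Pk k * (a k) ^ 2 / (σ2 + Pk k * (a k) ^ 2 * r))⁻¹ :=
  ScalarFixedPoint.existsUnique_eq_inv_one_add_sum hσ
    (fun k => mul_nonneg (hPk k).le (sq_nonneg (a k))) (inv_nonneg.2 (Nat.cast_nonneg F))

/-- the scalar fixed-point equation
`r = (1 + (1/F) Σ_k P_k a_k²/(σ² + P_k a_k² r))⁻¹` has exactly one solution in `(0,1]`. -/
theorem scalar_fixed_point_exists_unique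
    (F K : ℕ) (hF : 1 ≤ F) (hK : 1 ≤ K) (σ2 : ℝ) (hσ : 0 < σ2)
    (a Pk : Fin K → ℝ) (ha : ∀ k, 0 < a k) (hPk : ∀ k, 0 < Pk k) :
    ∃! r : ℝ, r ∈ Set.Ioc (0 : ℝ) 1 ∧
      r = (1 + (F : ℝ)⁻¹ *
        ∑ k, Pk k * (a k) ^ 2 / (σ2 + Pk k * (a k) ^ 2 * r))⁻¹ :=
  scalar_fixed_point_exists_unique_general F K σ2 hσ a Pk hPk
end

section
/- If V ∈ C₂ satisfies the allocation system, namely Σ_{f=1}^F v_{f,k} = P_k for every k and Σ_{k=1}^K β_k v_{f,k} = 1/r* − 1 for every f, then V is a global maximizer of the deterministic EMI over C₂: J̄(V,σ²) ≥ J̄(V',σ²) for every V' ∈ C₂. -/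
open MeasureTheory ProbabilityTheory Matrix

/-- The deterministic-equivalent EMI formula `J̄(V,σ²)` evaluated at a solution `(r, r̃)`
of the fixed-point system. -/
noncomputable def detEMIbar {F K : ℕ} (σ2 : ℝ) (a : Fin K → ℝ)
    (V : Matrix (Fin F) (Fin K) ℝ) (r : Fin F → ℝ) (rt : Fin K → ℝ) : ℝ :=
  (F : ℝ)⁻¹ * ∑ k, Real.log (1 + (a k) ^ 2 / σ2 * ∑ f, V f k * r f)
  + (F : ℝ)⁻¹ * ∑ f, Real.log (1 + σ2⁻¹ * ∑ k, V f k * (a k) ^ 2 * rt k)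
  - (σ2 * F)⁻¹ * ∑ f, ∑ k, V f k * (a k) ^ 2 * r f * rt k

open Classical

/-- `(r, r̃)` is the solution of the fixed-point system lying in `(0,1]^F × (0,1]^K`. -/
def FPsol {F K : ℕ} (σ2 : ℝ) (a : Fin K → ℝ) (V : Matrix (Fin F) (Fin K) ℝ)
    (r : Fin F → ℝ) (rt : Fin K → ℝ) : Prop :=
  (∀ f, r f ∈ Set.Ioc (0 : ℝ) 1) ∧ (∀ k, rt k ∈ Set.Ioc (0 : ℝ) 1) ∧
    IsFP σ2 a V r rt

/-- The deterministic-equivalent EMI `J̄(V,σ²)`, as a function of `V` alone, evaluated at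
the (unique) solution of the fixed-point system in `(0,1]^F × (0,1]^K`. -/
noncomputable def detEMI {F K : ℕ} (σ2 : ℝ) (a : Fin K → ℝ)
    (V : Matrix (Fin F) (Fin K) ℝ) : ℝ :=
  if h : ∃ r : Fin F → ℝ, ∃ rt : Fin K → ℝ, FPsol σ2 a V r rt then
    detEMIbar σ2 a V h.choose h.choose_spec.choose
  else 0

/-!
Put `w_{f,k} = v_{f,k} a_k² / σ²` and `q_k = P_k a_k² / σ²`; then `F · J̄` is the potential
`Φ(r, r̃) = ∑_k log (1 + ∑_f w_{f,k} r_f) + ∑_f (log (1 + d_f) - r_f d_f)`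
with `d_f = ∑_k w_{f,k} r̃_k`.
For every `V' ∈ C₂` and every `ρ > 0`, convexity of `s ↦ log (1 + ∑_f w_{f,k} exp s_f)` between
`s = log r` and the constant vector `log ρ`, together with `log x ≤ x - 1`, gives
`Φ ≤ ∑_k log (1 + q_k ρ) + F (ρ - log ρ - 1)`.
If `V` satisfies the allocation system, then `r ≡ r*`, `r̃_k = 1 / (1 + q_k r*)` solves its
fixed-point system and attains this bound at `ρ = r*`. It is the only solution: at a maximal
(minimal) `r_f` the fixed-point equation forces `φ_f (r_f) ≤ 1 = φ_f (r*)` (resp. `≥`), where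
`φ_f x = x (1 + ∑_k w_{f,k} / (1 + q_k x))` is strictly increasing.
-/

open Real Finset

theorem log_one_add_sum_add_sum_mul_log_div_le {ι : Type*} [Fintype ι] {c x y : ι → ℝ}
    (hc : ∀ i, 0 ≤ c i) (hx : ∀ i, 0 < x i) (hy : ∀ i, 0 < y i) :
    log (1 + ∑ i, c i * x i) + ∑ i, c i * x i * (1 + ∑ i, c i * x i)⁻¹ * log (y i / x i)
      ≤ log (1 + ∑ i, c i * y i) := by
  have hD : 0 < 1 + ∑ i, c i * x i := by
    have := sum_nonneg fun i (_ : i ∈ univ) => mul_nonneg (hc i) (hx i).le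
    linarith
  have hE : 0 < 1 + ∑ i, c i * y i := by
    have := sum_nonneg fun i (_ : i ∈ univ) => mul_nonneg (hc i) (hy i).le
    linarith
  -- Jensen for `log`; the extra index `none` carries the point `1`
  have jensen := strictConcaveOn_log_Ioi.concaveOn.le_map_sum (t := univ)
    (w := Option.elim' (1 + ∑ i, c i * x i)⁻¹ fun i => c i * x i * (1 + ∑ i, c i * x i)⁻¹)
    (p := Option.elim' 1 fun i => y i / x i)
    (by
      rintro (_ | i) -
      exacts [inv_nonneg.2 hD.le, mul_nonneg (mul_nonneg (hc i) (hx i).le) (inv_nonneg.2 hD.le)])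
    (by simp only [Fintype.sum_option, Option.elim'_none, Option.elim'_some, ← sum_mul]; field_simp)
    (by rintro (_ | i) -; exacts [Set.mem_Ioi.2 one_pos, div_pos (hy i) (hx i)])
  have hbar : (1 + ∑ i, c i * x i)⁻¹ * 1
      + ∑ i, c i * x i * (1 + ∑ i, c i * x i)⁻¹ * (y i / x i)
      = (1 + ∑ i, c i * y i) / (1 + ∑ i, c i * x i) := by
    rw [add_div, sum_div, inv_mul_eq_div]
    exact congrArg _ (sum_congr rfl fun i _ => by field_simp [(hx i).ne'])
  simp only [Fintype.sum_option, Option.elim'_none, Option.elim'_some, smul_eq_mul, hbar,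
    log_one, mul_zero, zero_add, log_div hE.ne' hD.ne'] at jensen
  linarith

theorem log_one_add_sub_mul_eq {r d : ℝ} (h : r * (1 + d) = 1) :
    log (1 + d) - r * d = r - log r - 1 := by
  rw [eq_inv_of_mul_eq_one_right h, log_inv]
  linear_combination -h

theorem sub_log_sub_one_sub_mul_log_div_le {r ρ : ℝ} (hr : 0 < r) (hρ : 0 < ρ) :
    r - log r - 1 - (1 - r) * log (ρ / r) ≤ ρ - log ρ - 1 := by
  have key : r * log (ρ / r) ≤ ρ - r := by
    have := mul_le_mul_of_nonneg_left (log_le_sub_one_of_pos (div_pos hρ hr)) hr.le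
    rwa [mul_sub, mul_div_cancel₀ _ hr.ne', mul_one] at this
  rw [log_div hρ.ne' hr.ne'] at key ⊢
  linarith

theorem div_one_add_mul_le_div_one_add_mul {q x y : ℝ} (hq : 0 ≤ q) (hx : 0 ≤ x) (hxy : x ≤ y) :
    x / (1 + q * x) ≤ y / (1 + q * y) := by
  rw [div_le_div_iff₀ (by positivity) (by nlinarith)]
  linarith

theorem strictMonoOn_mul_one_add_sum_mul_inv {κ : Type*} [Fintype κ] {c q : κ → ℝ}
    (hc : ∀ j, 0 ≤ c j) (hq : ∀ j, 0 ≤ q j) :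
    StrictMonoOn (fun x => x * (1 + ∑ j, c j * (1 + q j * x)⁻¹)) (Set.Ici 0) := by
  intro x hx y hy hxy
  have expand : ∀ z, z * (1 + ∑ j, c j * (1 + q j * z)⁻¹) = z + ∑ j, c j * (z / (1 + q j * z)) :=
    fun z => by rw [mul_add, mul_one, mul_sum]; simp only [div_eq_mul_inv, mul_left_comm]
  simp only [expand]
  exact add_lt_add_of_lt_of_le hxy <| sum_le_sum fun j _ =>
    mul_le_mul_of_nonneg_left (div_one_add_mul_le_div_one_add_mul (hq j) hx hxy.le) (hc j)

section NormalizedFixedPoint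

variable {ι κ : Type*} [Fintype ι] [Fintype κ] {w : Matrix ι κ ℝ} {r : ι → ℝ} {rt : κ → ℝ}
  {q : κ → ℝ} {ρ : ℝ}

def IsNormalizedFP (w : Matrix ι κ ℝ) (r : ι → ℝ) (rt : κ → ℝ) : Prop :=
  (∀ i, r i = (1 + ∑ j, w i j * rt j)⁻¹) ∧ (∀ j, rt j = (1 + ∑ i, w i j * r i)⁻¹)

noncomputable def potential (w : Matrix ι κ ℝ) (r : ι → ℝ) (rt : κ → ℝ) : ℝ :=
  ∑ j, log (1 + ∑ i, w i j * r i) + ∑ i, (log (1 + ∑ j, w i j * rt j) - r i * ∑ j, w i j * rt j)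

noncomputable def potentialBound (n : ℕ) (q : κ → ℝ) (ρ : ℝ) : ℝ :=
  ∑ j, log (1 + q j * ρ) + n * (ρ - log ρ - 1)

theorem potentialBound_nonneg (n : ℕ) (hq : ∀ j, 0 ≤ q j) (hρ : 0 < ρ) :
    0 ≤ potentialBound n q ρ := by
  have hlog : 0 ≤ ∑ j, log (1 + q j * ρ) :=
    sum_nonneg fun j _ => log_nonneg (by nlinarith [hq j])
  have := log_le_sub_one_of_pos hρ
  exact add_nonneg hlog (mul_nonneg n.cast_nonneg (by linarith))

namespace IsNormalizedFP

theorem mul_row_eq_one (h : IsNormalizedFP w r rt) {i : ι} (hr : r i ≠ 0) :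
    r i * (1 + ∑ j, w i j * rt j) = 1 :=
  (mul_eq_one_iff_eq_inv₀ fun h0 => hr (by rw [h.1 i, h0, _root_.inv_zero])).2 (h.1 i)

theorem log_one_add_sub_mul_eq (h : IsNormalizedFP w r rt) {i : ι} (hr : r i ≠ 0) :
    log (1 + ∑ j, w i j * rt j) - r i * ∑ j, w i j * rt j = r i - log (r i) - 1 :=
  _root_.log_one_add_sub_mul_eq (h.mul_row_eq_one hr)

theorem potential_le (hw : ∀ i j, 0 ≤ w i j) (hq : ∀ j, ∑ i, w i j ≤ q j)
    (h : IsNormalizedFP w r rt) (hr : ∀ i, 0 < r i) (hρ : 0 < ρ) :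
    potential w r rt ≤ potentialBound (Fintype.card ι) q ρ := by
  have hjensen : ∀ j, log (1 + ∑ i, w i j * r i) + ∑ i, w i j * r i * rt j * log (ρ / r i)
      ≤ log (1 + q j * ρ) := by
    intro j
    have jensen := log_one_add_sum_add_sum_mul_log_div_le (fun i => hw i j) hr (y := fun _ => ρ)
      fun _ => hρ
    simp only [← h.2 j, ← sum_mul] at jensen
    have hS : 0 ≤ ∑ i, w i j := sum_nonneg fun i _ => hw i j
    exact jensen.trans (log_le_log (by positivity) (by gcongr; exact hq j))
  have hswap : ∑ j, ∑ i, w i j * r i * rt j * log (ρ / r i)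
      = ∑ i, (1 - r i) * log (ρ / r i) := by
    rw [sum_comm]
    refine sum_congr rfl fun i _ => ?_
    rw [← h.mul_row_eq_one (hr i).ne', mul_add, mul_one, add_sub_cancel_left, mul_sum, sum_mul]
    exact sum_congr rfl fun j _ => by ring
  calc potential w r rt
      = ∑ j, log (1 + ∑ i, w i j * r i) + ∑ i, (r i - log (r i) - 1) := by
        simp only [potential, h.log_one_add_sub_mul_eq (hr _).ne']
    _ ≤ ∑ j, (log (1 + q j * ρ) - ∑ i, w i j * r i * rt j * log (ρ / r i))
          + ∑ i, (r i - log (r i) - 1) := by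
        gcongr with j
        linarith [hjensen j]
    _ = ∑ j, log (1 + q j * ρ) + ∑ i, (r i - log (r i) - 1 - (1 - r i) * log (ρ / r i)) := by
        rw [sum_sub_distrib, hswap, sum_sub_distrib (f := fun i => r i - log (r i) - 1)]
        ring
    _ ≤ ∑ j, log (1 + q j * ρ) + ∑ _i : ι, (ρ - log ρ - 1) :=
        add_le_add le_rfl (sum_le_sum fun i _ => sub_log_sub_one_sub_mul_log_div_le (hr i) hρ)
    _ = potentialBound (Fintype.card ι) q ρ := by
        rw [potentialBound, sum_const, card_univ, nsmul_eq_mul]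

theorem potential_const_eq (hcol : ∀ j, ∑ i, w i j = q j) (h : IsNormalizedFP w (fun _ => ρ) rt)
    (hρ : ρ ≠ 0) : potential w (fun _ => ρ) rt = potentialBound (Fintype.card ι) q ρ := by
  simp only [potential, potentialBound, ← sum_mul, hcol, h.log_one_add_sub_mul_eq hρ, sum_const,
    card_univ, nsmul_eq_mul]

theorem le_of_forall_le (hw : ∀ i j, 0 ≤ w i j) (hcol : ∀ j, ∑ i, w i j = q j) (hρ : 0 < ρ)
    (hrow : ∀ i, ρ * (1 + ∑ j, w i j * (1 + q j * ρ)⁻¹) = 1) (h : IsNormalizedFP w r rt)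
    (hr : ∀ i, 0 < r i) {i₀ : ι} (hmax : ∀ i, r i ≤ r i₀) : r i₀ ≤ ρ := by
  have hq : ∀ j, 0 ≤ q j := fun j => hcol j ▸ sum_nonneg fun i _ => hw i j
  refine ((strictMonoOn_mul_one_add_sum_mul_inv (hw i₀) hq).le_iff_le (hr i₀).le hρ.le).1 ?_
  calc r i₀ * (1 + ∑ j, w i₀ j * (1 + q j * r i₀)⁻¹)
      ≤ r i₀ * (1 + ∑ j, w i₀ j * rt j) := by
        gcongr with j
        · exact (hr i₀).le
        · exact hw i₀ j
        have hS : 0 ≤ ∑ i, w i j * r i := sum_nonneg fun i _ => mul_nonneg (hw i j) (hr i).le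
        rw [h.2 j]
        refine inv_anti₀ (by positivity) (add_le_add le_rfl ?_)
        calc ∑ i, w i j * r i ≤ ∑ i, w i j * r i₀ :=
              sum_le_sum fun i _ => mul_le_mul_of_nonneg_left (hmax i) (hw i j)
          _ = q j * r i₀ := by rw [← sum_mul, hcol]
    _ = ρ * (1 + ∑ j, w i₀ j * (1 + q j * ρ)⁻¹) := by
        rw [h.mul_row_eq_one (hr i₀).ne', hrow i₀]

theorem le_of_forall_ge (hw : ∀ i j, 0 ≤ w i j) (hcol : ∀ j, ∑ i, w i j = q j) (hρ : 0 < ρ)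
    (hrow : ∀ i, ρ * (1 + ∑ j, w i j * (1 + q j * ρ)⁻¹) = 1) (h : IsNormalizedFP w r rt)
    (hr : ∀ i, 0 < r i) {i₀ : ι} (hmin : ∀ i, r i₀ ≤ r i) : ρ ≤ r i₀ := by
  have hq : ∀ j, 0 ≤ q j := fun j => hcol j ▸ sum_nonneg fun i _ => hw i j
  refine ((strictMonoOn_mul_one_add_sum_mul_inv (hw i₀) hq).le_iff_le hρ.le (hr i₀).le).1 ?_
  calc ρ * (1 + ∑ j, w i₀ j * (1 + q j * ρ)⁻¹)
      = r i₀ * (1 + ∑ j, w i₀ j * rt j) := by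
        rw [h.mul_row_eq_one (hr i₀).ne', hrow i₀]
    _ ≤ r i₀ * (1 + ∑ j, w i₀ j * (1 + q j * r i₀)⁻¹) := by
        gcongr with j
        · exact (hr i₀).le
        · exact hw i₀ j
        have hqr : 0 ≤ q j * r i₀ := mul_nonneg (hq j) (hr i₀).le
        rw [h.2 j]
        refine inv_anti₀ (by positivity) (add_le_add le_rfl ?_)
        calc q j * r i₀ = ∑ i, w i j * r i₀ := by rw [← sum_mul, hcol]
          _ ≤ ∑ i, w i j * r i :=
              sum_le_sum fun i _ => mul_le_mul_of_nonneg_left (hmin i) (hw i j)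

theorem eq_const (hw : ∀ i j, 0 ≤ w i j) (hcol : ∀ j, ∑ i, w i j = q j) (hρ : 0 < ρ)
    (hrow : ∀ i, ρ * (1 + ∑ j, w i j * (1 + q j * ρ)⁻¹) = 1) (h : IsNormalizedFP w r rt)
    (hr : ∀ i, 0 < r i) : r = fun _ => ρ := by
  funext i
  have : Nonempty ι := ⟨i⟩
  obtain ⟨imax, hmax⟩ := Finite.exists_max r
  obtain ⟨imin, hmin⟩ := Finite.exists_min r
  exact le_antisymm ((hmax i).trans (h.le_of_forall_le hw hcol hρ hrow hr hmax))
    ((h.le_of_forall_ge hw hcol hρ hrow hr hmin).trans (hmin i))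

end IsNormalizedFP

theorem isNormalizedFP_const (hcol : ∀ j, ∑ i, w i j = q j)
    (hrow : ∀ i, ρ * (1 + ∑ j, w i j * (1 + q j * ρ)⁻¹) = 1) :
    IsNormalizedFP w (fun _ => ρ) fun j => (1 + q j * ρ)⁻¹ :=
  ⟨fun i => eq_inv_of_mul_eq_one_left (hrow i), fun j => by simp only [← sum_mul, hcol]⟩

end NormalizedFixedPoint

section SNR

variable {ι κ : Type*} {σ2 : ℝ} {a : κ → ℝ} {V : Matrix ι κ ℝ}

noncomputable def snr (σ2 : ℝ) (a : κ → ℝ) (V : Matrix ι κ ℝ) : Matrix ι κ ℝ :=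
  fun i j => V i j * a j ^ 2 / σ2

theorem snr_nonneg (hσ : 0 ≤ σ2) (hV : ∀ i j, 0 ≤ V i j) (i : ι) (j : κ) : 0 ≤ snr σ2 a V i j :=
  div_nonneg (mul_nonneg (hV i j) (sq_nonneg _)) hσ

theorem sum_snr [Fintype ι] (j : κ) : ∑ i, snr σ2 a V i j = (∑ i, V i j) * a j ^ 2 / σ2 := by
  simp only [snr, ← sum_div, ← sum_mul]

theorem div_mul_sum_eq_sum_snr_mul [Fintype ι] (j : κ) (x : ι → ℝ) :
    a j ^ 2 / σ2 * ∑ i, V i j * x i = ∑ i, snr σ2 a V i j * x i := by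
  simp only [snr, mul_sum]
  exact sum_congr rfl fun i _ => by ring

theorem inv_mul_sum_eq_sum_snr_mul [Fintype κ] (i : ι) (y : κ → ℝ) :
    σ2⁻¹ * ∑ j, V i j * a j ^ 2 * y j = ∑ j, snr σ2 a V i j * y j := by
  simp only [snr, mul_sum]
  exact sum_congr rfl fun j _ => by ring

end SNR

section DetEMI

variable {F K : ℕ} {σ2 : ℝ} {a Pk : Fin K → ℝ} {V : Matrix (Fin F) (Fin K) ℝ} {ρ : ℝ}

theorem isFP_iff_isNormalizedFP {r : Fin F → ℝ} {rt : Fin K → ℝ} :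
    IsFP σ2 a V r rt ↔ IsNormalizedFP (snr σ2 a V) r rt := by
  simp only [IsFP, IsNormalizedFP, div_mul_sum_eq_sum_snr_mul, inv_mul_sum_eq_sum_snr_mul]

theorem detEMIbar_eq_potential (r : Fin F → ℝ) (rt : Fin K → ℝ) :
    detEMIbar σ2 a V r rt = (F : ℝ)⁻¹ * potential (snr σ2 a V) r rt := by
  have hcross : (σ2 * F)⁻¹ * ∑ f, ∑ k, V f k * a k ^ 2 * r f * rt k
      = (F : ℝ)⁻¹ * ∑ f, r f * ∑ k, snr σ2 a V f k * rt k := by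
    simp only [← inv_mul_sum_eq_sum_snr_mul, mul_inv, mul_sum]
    exact sum_congr rfl fun f _ => sum_congr rfl fun k _ => by ring
  rw [detEMIbar, potential, sum_sub_distrib, hcross]
  simp only [div_mul_sum_eq_sum_snr_mul, inv_mul_sum_eq_sum_snr_mul]
  ring

theorem detEMI_eq_of_forall {c : ℝ} (hex : ∃ r rt, FPsol σ2 a V r rt)
    (h : ∀ r rt, FPsol σ2 a V r rt → detEMIbar σ2 a V r rt = c) : detEMI σ2 a V = c := by
  rw [detEMI, dif_pos hex]
  exact h _ _ hex.choose_spec.choose_spec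

theorem detEMI_le_of_forall {c : ℝ} (hc : 0 ≤ c)
    (h : ∀ r rt, FPsol σ2 a V r rt → detEMIbar σ2 a V r rt ≤ c) : detEMI σ2 a V ≤ c := by
  rw [detEMI]
  split_ifs with hex
  exacts [h _ _ hex.choose_spec.choose_spec, hc]

theorem detEMI_le_of_sum_le (hσ : 0 < σ2) (hρ : 0 < ρ) (hV : ∀ f k, 0 ≤ V f k)
    (hPk : ∀ k, ∑ f, V f k ≤ Pk k) :
    detEMI σ2 a V ≤ (F : ℝ)⁻¹ * potentialBound F (fun k => Pk k * a k ^ 2 / σ2) ρ := by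
  have hcol : ∀ k, ∑ f, snr σ2 a V f k ≤ Pk k * a k ^ 2 / σ2 := fun k => by
    rw [sum_snr]
    gcongr
    exact hPk k
  have hq : ∀ k, 0 ≤ Pk k * a k ^ 2 / σ2 :=
    fun k => (sum_nonneg fun f _ => snr_nonneg hσ.le hV f k).trans (hcol k)
  refine detEMI_le_of_forall (mul_nonneg (by positivity) (potentialBound_nonneg F hq hρ))
    fun r rt ⟨hr, _, hsol⟩ => ?_
  rw [detEMIbar_eq_potential]
  gcongr
  simpa only [Fintype.card_fin] using (isFP_iff_isNormalizedFP.1 hsol).potential_le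
    (snr_nonneg hσ.le hV) hcol (fun f => (hr f).1) hρ

theorem mul_one_add_sum_snr_mul_inv_eq_one (hσ : 0 < σ2) (hρ : 0 < ρ) (hV : ∀ f k, 0 ≤ V f k)
    (halloc1 : ∀ k, ∑ f, V f k = Pk k)
    (halloc2 : ∀ f, ∑ k, a k ^ 2 / (σ2 + Pk k * a k ^ 2 * ρ) * V f k = 1 / ρ - 1) (f : Fin F) :
    ρ * (1 + ∑ k, snr σ2 a V f k * (1 + Pk k * a k ^ 2 / σ2 * ρ)⁻¹) = 1 := by
  have hβ : ∀ k, snr σ2 a V f k * (1 + Pk k * a k ^ 2 / σ2 * ρ)⁻¹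
      = a k ^ 2 / (σ2 + Pk k * a k ^ 2 * ρ) * V f k := fun k => by
    have hPk : 0 ≤ Pk k := halloc1 k ▸ sum_nonneg fun f _ => hV f k
    have : σ2 + Pk k * a k ^ 2 * ρ ≠ 0 := by positivity
    simp only [snr]
    field_simp
  rw [sum_congr rfl fun k _ => hβ k, halloc2 f]
  field_simp
  ring

theorem detEMI_eq_of_allocation (hσ : 0 < σ2) (hρ : ρ ∈ Set.Ioc 0 1) (hV : ∀ f k, 0 ≤ V f k)
    (halloc1 : ∀ k, ∑ f, V f k = Pk k)
    (halloc2 : ∀ f, ∑ k, a k ^ 2 / (σ2 + Pk k * a k ^ 2 * ρ) * V f k = 1 / ρ - 1) :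
    detEMI σ2 a V = (F : ℝ)⁻¹ * potentialBound F (fun k => Pk k * a k ^ 2 / σ2) ρ := by
  have hcol : ∀ k, ∑ f, snr σ2 a V f k = Pk k * a k ^ 2 / σ2 := fun k => by rw [sum_snr, halloc1]
  have hrow := mul_one_add_sum_snr_mul_inv_eq_one hσ hρ.1 hV halloc1 halloc2
  have hq : ∀ k, 0 ≤ Pk k * a k ^ 2 / σ2 :=
    fun k => hcol k ▸ sum_nonneg fun f _ => snr_nonneg hσ.le hV f k
  have hone : ∀ k, 1 ≤ 1 + Pk k * a k ^ 2 / σ2 * ρ :=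
    fun k => le_add_of_nonneg_right (mul_nonneg (hq k) hρ.1.le)
  refine detEMI_eq_of_forall ⟨_, _, fun _ => hρ, fun k => ⟨inv_pos.2 (one_pos.trans_le (hone k)),
    inv_le_one_of_one_le₀ (hone k)⟩, isFP_iff_isNormalizedFP.2 (isNormalizedFP_const hcol hrow)⟩
    fun r rt ⟨hr, _, hsol⟩ => ?_
  rw [isFP_iff_isNormalizedFP] at hsol
  obtain rfl := hsol.eq_const (snr_nonneg hσ.le hV) hcol hρ.1 hrow fun f => (hr f).1
  rw [detEMIbar_eq_potential, hsol.potential_const_eq hcol hρ.1.ne', Fintype.card_fin]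

end DetEMI

theorem allocation_system_is_maximizer_general
    (F K : ℕ) (σ2 : ℝ) (hσ : 0 < σ2)
    (a Pk : Fin K → ℝ)
    (rstar : ℝ) (hr1 : rstar ∈ Set.Ioc (0 : ℝ) 1)
    (V : Matrix (Fin F) (Fin K) ℝ)
    (hV1 : ∀ f k, 0 ≤ V f k)
    (halloc1 : ∀ k, ∑ f, V f k = Pk k)
    (halloc2 : ∀ f, ∑ k, (a k) ^ 2 / (σ2 + Pk k * (a k) ^ 2 * rstar) * V f k
        = 1 / rstar - 1) :
    ∀ V' : Matrix (Fin F) (Fin K) ℝ,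
      (∀ f k, 0 ≤ V' f k) → (∀ k, ∑ f, V' f k ≤ Pk k) →
      detEMI σ2 a V' ≤ detEMI σ2 a V := by
  intro V' hV'1 hV'2
  rw [detEMI_eq_of_allocation hσ hr1 hV1 halloc1 halloc2]
  exact detEMI_le_of_sum_le hσ hr1.1 hV'1 hV'2

/-- any `V ∈ C₂` satisfying the allocation system
(`Σ_f v_{f,k} = P_k` for all `k`, and `Σ_k β_k v_{f,k} = 1/r* − 1` for all `f`)
is a global maximizer of the deterministic EMI over `C₂`. -/
theorem allocation_system_is_maximizer
    (F K : ℕ) (hF : 1 ≤ F) (hK : 1 ≤ K) (σ2 : ℝ) (hσ : 0 < σ2)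
    (a Pk : Fin K → ℝ) (ha : ∀ k, 0 < a k) (hPk : ∀ k, 0 < Pk k)
    (rstar : ℝ) (hr1 : rstar ∈ Set.Ioc (0 : ℝ) 1)
    (hr2 : rstar = (1 + (F : ℝ)⁻¹ *
        ∑ k, Pk k * (a k) ^ 2 / (σ2 + Pk k * (a k) ^ 2 * rstar))⁻¹)
    (V : Matrix (Fin F) (Fin K) ℝ)
    (hV1 : ∀ f k, 0 ≤ V f k) (hV2 : ∀ k, ∑ f, V f k ≤ Pk k)
    (halloc1 : ∀ k, ∑ f, V f k = Pk k)
    (halloc2 : ∀ f, ∑ k, (a k) ^ 2 / (σ2 + Pk k * (a k) ^ 2 * rstar) * V f k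
        = 1 / rstar - 1) :
    ∀ V' : Matrix (Fin F) (Fin K) ℝ,
      (∀ f k, 0 ≤ V' f k) → (∀ k, ∑ f, V' f k ≤ Pk k) →
      detEMI σ2 a V' ≤ detEMI σ2 a V :=
  allocation_system_is_maximizer_general F K σ2 hσ a Pk rstar hr1 V hV1 halloc1 halloc2
end

section
/- If V ∈ C₂ satisfies the allocation system, namely Σ_{f=1}^F v_{f,k} = P_k for every k and Σ_{k=1}^K β_k v_{f,k} = 1/r* − 1 for every f, then the unique solution (r, r̃) ∈ (0,1]^F × (0,1]^K of the fixed-point system associated with V satisfies r_f = r* for every f and r̃_k = r̃_k* for every k, and moreover J̄(V,σ²) = −(1/F) Σ_{k=1}^K log r̃_k* − log r* − (r*/(σ²F)) Σ_{k=1}^K P_k a_k² r̃_k*. -/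
open MeasureTheory ProbabilityTheory Matrix

/-!
Under the allocation conditions the constant pair `r_f = r*`, `r̃_k = r̃_k*` solves the fixed-point
system. Eliminating `r̃` turns the system into a fixed-point equation `r = T r` for a map `T` that
is monotone and strictly scalable (`s ≤ t r` with `t > 1` forces `T s < t T r`), and such a map has
at most one positive fixed point: at an index `j` maximising `s_j / r_j =: t > 1` one would get
`s_j = (T s)_j < t (T r)_j = s_j`. The value of `J̄` then follows by substituting the solution.
-/

open Finset

section Scalable

variable {ι : Type*}

/-- Monotonicity and scalability of Yates' standard interference functions, merged into one
condition. -/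
def MonotoneScalable (T : (ι → ℝ) → ι → ℝ) : Prop :=
  ∀ r s : ι → ℝ, (∀ i, 0 < r i) → (∀ i, 0 < s i) →
    ∀ t : ℝ, 1 < t → (∀ i, s i ≤ t * r i) → ∀ i, T s i < t * T r i

theorem MonotoneScalable.le_of_isFixedPt [Finite ι] {T : (ι → ℝ) → ι → ℝ}
    (hT : MonotoneScalable T) {r s : ι → ℝ} (hr : ∀ i, 0 < r i) (hs : ∀ i, 0 < s i)
    (hTr : Function.IsFixedPt T r) (hTs : Function.IsFixedPt T s) (i : ι) : s i ≤ r i := by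
  by_contra! hlt
  have : Nonempty ι := ⟨i⟩
  obtain ⟨j, hj⟩ := Finite.exists_max fun i => s i / r i
  have hsr : ∀ i, s i ≤ s j / r j * r i := fun i => (div_le_iff₀ (hr i)).mp (hj i)
  have ht : 1 < s j / r j := ((one_lt_div (hr i)).mpr hlt).trans_le (hj i)
  have := hT r s hr hs _ ht hsr j
  rw [hTr.eq, hTs.eq, div_mul_cancel₀ _ (hr j).ne'] at this
  exact this.false

theorem MonotoneScalable.eq_of_isFixedPt [Finite ι] {T : (ι → ℝ) → ι → ℝ}
    (hT : MonotoneScalable T) {r s : ι → ℝ} (hr : ∀ i, 0 < r i) (hs : ∀ i, 0 < s i)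
    (hTr : Function.IsFixedPt T r) (hTs : Function.IsFixedPt T s) : r = s :=
  funext fun i =>
    le_antisymm (hT.le_of_isFixedPt hs hr hTs hTr i) (hT.le_of_isFixedPt hr hs hTr hTs i)

end Scalable

section ReducedMap

variable {ι κ : Type*} [Fintype ι] [Fintype κ]

/-- The fixed-point map in `r` alone, obtained by substituting the equation for `r̃`. -/
noncomputable def reducedMap (σ2 : ℝ) (a : κ → ℝ) (V : Matrix ι κ ℝ) (r : ι → ℝ) : ι → ℝ :=
  fun i => (1 + ∑ k, V i k * a k ^ 2 / (σ2 + a k ^ 2 * ∑ i', V i' k * r i'))⁻¹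

theorem div_le_mul_div_of_le_mul {c D D' t : ℝ} (hc : 0 ≤ c) (hD' : 0 < D') (ht : 0 < t)
    (h : D' ≤ t * D) : c / D ≤ t * (c / D') := by
  calc c / D = t * c / (t * D) := (mul_div_mul_left c D ht.ne').symm
    _ ≤ t * c / D' := div_le_div_of_nonneg_left (by positivity) hD' h
    _ = t * (c / D') := mul_div_assoc t c D'

theorem monotoneScalable_reducedMap {σ2 : ℝ} (hσ : 0 < σ2) (a : κ → ℝ) {V : Matrix ι κ ℝ}
    (hV : ∀ i k, 0 ≤ V i k) : MonotoneScalable (reducedMap σ2 a V) := by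
  intro r s hr hs t ht hsr i
  have hload : ∀ k, ∑ i', V i' k * s i' ≤ t * ∑ i', V i' k * r i' := fun k => by
    rw [mul_sum]
    exact sum_le_sum fun i' _ => by nlinarith [hV i' k, hsr i']
  have hload_nonneg : ∀ (u : ι → ℝ), (∀ i, 0 < u i) → ∀ k, 0 ≤ ∑ i', V i' k * u i' :=
    fun u hu k => sum_nonneg fun i' _ => mul_nonneg (hV i' k) (hu i').le
  set A := ∑ k, V i k * a k ^ 2 / (σ2 + a k ^ 2 * ∑ i', V i' k * s i')
  set B := ∑ k, V i k * a k ^ 2 / (σ2 + a k ^ 2 * ∑ i', V i' k * r i')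
  have hA : 0 ≤ A := sum_nonneg fun k _ => by
    have := hload_nonneg s hs k; have := hV i k; positivity
  have hB : 0 ≤ B := sum_nonneg fun k _ => by
    have := hload_nonneg r hr k; have := hV i k; positivity
  have hBA : B ≤ t * A := by
    rw [mul_sum]
    refine sum_le_sum fun k _ => div_le_mul_div_of_le_mul (by have := hV i k; positivity)
      (by have := hload_nonneg s hs k; positivity) (by linarith) ?_
    nlinarith [hload k, hload_nonneg r hr k, sq_nonneg (a k)]
  change (1 + A)⁻¹ < t * (1 + B)⁻¹
  rw [← div_eq_mul_inv, lt_div_iff₀ (by positivity), inv_mul_eq_div, div_lt_iff₀ (by positivity)]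
  linarith

end ReducedMap

theorem inv_one_add_div {α : Type*} [DivisionRing α] {σ x : α} (hσ : σ ≠ 0) :
    (1 + x / σ)⁻¹ = σ / (σ + x) := by
  rw [one_add_div hσ, inv_div]

variable {F K : ℕ} {σ2 : ℝ} {a : Fin K → ℝ} {V : Matrix (Fin F) (Fin K) ℝ}

theorem IsFP.isFixedPt_reducedMap {r : Fin F → ℝ} {rt : Fin K → ℝ} (h : IsFP σ2 a V r rt)
    (hσ : σ2 ≠ 0) : Function.IsFixedPt (reducedMap σ2 a V) r := by
  funext f
  rw [reducedMap, h.1 f, mul_sum]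
  congr 2
  refine sum_congr rfl fun k _ => ?_
  rw [h.2 k, div_mul_eq_mul_div, inv_one_add_div hσ]
  field_simp

theorem isFP_of_allocation (hσ : σ2 ≠ 0) {Pk : Fin K → ℝ} {rstar : ℝ}
    (halloc1 : ∀ k, ∑ f, V f k = Pk k)
    (halloc2 : ∀ f, ∑ k, a k ^ 2 / (σ2 + Pk k * a k ^ 2 * rstar) * V f k = 1 / rstar - 1) :
    IsFP σ2 a V (fun _ => rstar) (fun k => σ2 / (σ2 + Pk k * a k ^ 2 * rstar)) := by
  refine ⟨fun f => ?_, fun k => ?_⟩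
  · have hsum : σ2⁻¹ * ∑ k, V f k * a k ^ 2 * (σ2 / (σ2 + Pk k * a k ^ 2 * rstar))
        = 1 / rstar - 1 := by
      rw [← halloc2 f, mul_sum]
      exact sum_congr rfl fun k _ => by field_simp
    change rstar = (1 + _)⁻¹
    rw [hsum, add_sub_cancel, one_div, inv_inv]
  · rw [← sum_mul, halloc1 k, div_mul_eq_mul_div, inv_one_add_div hσ]
    ring

theorem detEMIbar_eq_of_isFP {r : Fin F → ℝ} {rt : Fin K → ℝ} (h : IsFP σ2 a V r rt) :
    detEMIbar σ2 a V r rt =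
      -((F : ℝ)⁻¹ * ∑ k, Real.log (rt k)) - (F : ℝ)⁻¹ * ∑ f, Real.log (r f)
        - (σ2 * F)⁻¹ * ∑ f, ∑ k, V f k * a k ^ 2 * r f * rt k := by
  have hr : ∀ f, 1 + σ2⁻¹ * ∑ k, V f k * a k ^ 2 * rt k = (r f)⁻¹ := fun f => by
    rw [h.1 f, inv_inv]
  have hrt : ∀ k, 1 + a k ^ 2 / σ2 * ∑ f, V f k * r f = (rt k)⁻¹ := fun k => by
    rw [h.2 k, inv_inv]
  simp only [detEMIbar, hr, hrt, Real.log_inv, sum_neg_distrib]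
  ring

theorem detEMIbar_of_allocation (hF : F ≠ 0) (hσ : σ2 ≠ 0) {Pk : Fin K → ℝ} {rstar : ℝ}
    (halloc1 : ∀ k, ∑ f, V f k = Pk k)
    (halloc2 : ∀ f, ∑ k, a k ^ 2 / (σ2 + Pk k * a k ^ 2 * rstar) * V f k = 1 / rstar - 1) :
    detEMIbar σ2 a V (fun _ => rstar) (fun k => σ2 / (σ2 + Pk k * a k ^ 2 * rstar)) =
      -((F : ℝ)⁻¹ * ∑ k, Real.log (σ2 / (σ2 + Pk k * a k ^ 2 * rstar)))
        - Real.log rstar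
        - rstar / (σ2 * F) * ∑ k, Pk k * a k ^ 2 * (σ2 / (σ2 + Pk k * a k ^ 2 * rstar)) := by
  have hload : ∑ f, ∑ k, V f k * a k ^ 2 * rstar * (σ2 / (σ2 + Pk k * a k ^ 2 * rstar))
      = rstar * ∑ k, Pk k * a k ^ 2 * (σ2 / (σ2 + Pk k * a k ^ 2 * rstar)) := by
    rw [sum_comm, mul_sum]
    refine sum_congr rfl fun k _ => ?_
    rw [← sum_mul, ← sum_mul, ← sum_mul, halloc1 k]
    ring
  rw [detEMIbar_eq_of_isFP (isFP_of_allocation hσ halloc1 halloc2), hload]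
  simp only [sum_const, card_univ, Fintype.card_fin, nsmul_eq_mul]
  rw [inv_mul_cancel_left₀ (Nat.cast_ne_zero.mpr hF)]
  ring

theorem allocation_system_fixed_point_and_value_general
    (F K : ℕ) (hF : 1 ≤ F) (σ2 : ℝ) (hσ : 0 < σ2)
    (a Pk : Fin K → ℝ)
    (rstar : ℝ) (hr1 : rstar ∈ Set.Ioc (0 : ℝ) 1)
    (V : Matrix (Fin F) (Fin K) ℝ)
    (hV1 : ∀ f k, 0 ≤ V f k)
    (halloc1 : ∀ k, ∑ f, V f k = Pk k)
    (halloc2 : ∀ f, ∑ k, (a k) ^ 2 / (σ2 + Pk k * (a k) ^ 2 * rstar) * V f k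
        = 1 / rstar - 1) :
    ∀ (r : Fin F → ℝ) (rt : Fin K → ℝ),
      (∀ f, r f ∈ Set.Ioc (0 : ℝ) 1) → (∀ k, rt k ∈ Set.Ioc (0 : ℝ) 1) →
      IsFP σ2 a V r rt →
      (∀ f, r f = rstar) ∧
      (∀ k, rt k = σ2 / (σ2 + Pk k * (a k) ^ 2 * rstar)) ∧
      detEMIbar σ2 a V r rt =
        -((F : ℝ)⁻¹ * ∑ k, Real.log (σ2 / (σ2 + Pk k * (a k) ^ 2 * rstar)))
        - Real.log rstar
        - rstar / (σ2 * F) *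
            ∑ k, Pk k * (a k) ^ 2 * (σ2 / (σ2 + Pk k * (a k) ^ 2 * rstar)) := by
  intro r rt hr _ hfp
  have hstar := isFP_of_allocation hσ.ne' halloc1 halloc2
  obtain rfl : r = fun _ => rstar :=
    (monotoneScalable_reducedMap hσ a hV1).eq_of_isFixedPt (fun f => (hr f).1) (fun _ => hr1.1)
      (hfp.isFixedPt_reducedMap hσ.ne') (hstar.isFixedPt_reducedMap hσ.ne')
  obtain rfl : rt = fun k => σ2 / (σ2 + Pk k * a k ^ 2 * rstar) :=
    funext fun k => (hfp.2 k).trans (hstar.2 k).symm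
  exact ⟨fun _ => rfl, fun _ => rfl,
    detEMIbar_of_allocation (by omega) hσ.ne' halloc1 halloc2⟩

/-- if `V ∈ C₂` satisfies the allocation system, then the solution of the
fixed-point system associated with `V` satisfies `r_f = r*`, `r̃_k = r̃_k*`, and the
deterministic EMI has the stated closed form. -/
theorem allocation_system_fixed_point_and_value
    (F K : ℕ) (hF : 1 ≤ F) (hK : 1 ≤ K) (σ2 : ℝ) (hσ : 0 < σ2)
    (a Pk : Fin K → ℝ) (ha : ∀ k, 0 < a k) (hPk : ∀ k, 0 < Pk k)
    (rstar : ℝ) (hr1 : rstar ∈ Set.Ioc (0 : ℝ) 1)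
    (hr2 : rstar = (1 + (F : ℝ)⁻¹ *
        ∑ k, Pk k * (a k) ^ 2 / (σ2 + Pk k * (a k) ^ 2 * rstar))⁻¹)
    (V : Matrix (Fin F) (Fin K) ℝ)
    (hV1 : ∀ f k, 0 ≤ V f k) (hV2 : ∀ k, ∑ f, V f k ≤ Pk k)
    (halloc1 : ∀ k, ∑ f, V f k = Pk k)
    (halloc2 : ∀ f, ∑ k, (a k) ^ 2 / (σ2 + Pk k * (a k) ^ 2 * rstar) * V f k
        = 1 / rstar - 1) :
    ∀ (r : Fin F → ℝ) (rt : Fin K → ℝ),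
      (∀ f, r f ∈ Set.Ioc (0 : ℝ) 1) → (∀ k, rt k ∈ Set.Ioc (0 : ℝ) 1) →
      IsFP σ2 a V r rt →
      (∀ f, r f = rstar) ∧
      (∀ k, rt k = σ2 / (σ2 + Pk k * (a k) ^ 2 * rstar)) ∧
      detEMIbar σ2 a V r rt =
        -((F : ℝ)⁻¹ * ∑ k, Real.log (σ2 / (σ2 + Pk k * (a k) ^ 2 * rstar)))
        - Real.log rstar
        - rstar / (σ2 * F) *
            ∑ k, Pk k * (a k) ^ 2 * (σ2 / (σ2 + Pk k * (a k) ^ 2 * rstar)) :=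
  allocation_system_fixed_point_and_value_general F K hF σ2 hσ a Pk rstar hr1 V hV1 halloc1 halloc2
end

section
/- Fix vectors r ∈ (0,∞)^F and r̃ ∈ (0,∞)^K, and regard G̃(V) := G(V, r, r̃) as a function of the entries of V with (r, r̃) held constant. If (r, r̃) satisfies the fixed-point system associated with V, then for every f = 1..F and k = 1..K the partial derivative of G̃ with respect to v_{f,k}, evaluated at V, equals (1/(σ²F))·a_k²·r̃_k·r_f. -/
/-!
Since `(r, r̃)` is held fixed, `G̃` depends on `v_{f,k}` only through two logarithms of affine
functions and one bilinear term. Differentiating the logarithms produces the factors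
`(1 + …)⁻¹`, which the fixed-point equations identify with `r̃_k` and `r_f`; so each logarithm
contributes `a_k² r_f r̃_k / (σ² F)` and the bilinear term subtracts one such copy.
-/

open MeasureTheory ProbabilityTheory Matrix

section UpdateEntry

variable {𝕜 : Type*} [NontriviallyNormedField 𝕜] {m n : Type*} [DecidableEq m] [DecidableEq n]
  (V : Matrix m n 𝕜) (f : m) (k : n) (x : 𝕜)

theorem hasDerivAt_updateRow_update_apply (i : m) (j : n) :
    HasDerivAt (fun t => V.updateRow f (Function.update (V f) k t) i j)
      (if i = f ∧ j = k then 1 else 0) x := by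
  by_cases h : i = f ∧ j = k
  · obtain ⟨rfl, rfl⟩ := h
    simpa using hasDerivAt_id' x
  · have hconst : (fun t => V.updateRow f (Function.update (V f) k t) i j) = fun _ => V i j := by
      funext t
      rw [updateRow_apply]
      split_ifs with hi
      · subst hi
        exact Function.update_of_ne (fun hj => h ⟨rfl, hj⟩) _ _
      · rfl
    rw [if_neg h, hconst]
    exact hasDerivAt_const x _

theorem hasDerivAt_rowSum_updateRow_update [Fintype n] (c : n → 𝕜) (i : m) :
    HasDerivAt (fun t => ∑ j, V.updateRow f (Function.update (V f) k t) i j * c j)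
      (if i = f then c k else 0) x := by
  refine (HasDerivAt.fun_sum fun j _ =>
    (hasDerivAt_updateRow_update_apply V f k x i j).mul_const (c j)).congr_deriv ?_
  by_cases hi : i = f <;> simp [hi]

theorem hasDerivAt_colSum_updateRow_update [Fintype m] (c : m → 𝕜) (j : n) :
    HasDerivAt (fun t => ∑ i, V.updateRow f (Function.update (V f) k t) i j * c i)
      (if j = k then c f else 0) x := by
  refine (HasDerivAt.fun_sum fun i _ =>
    (hasDerivAt_updateRow_update_apply V f k x i j).mul_const (c i)).congr_deriv ?_
  by_cases hj : j = k <;> simp [hj]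

theorem hasDerivAt_totalSum_updateRow_update [Fintype m] [Fintype n] (W : Matrix m n 𝕜) :
    HasDerivAt (fun t => ∑ i, ∑ j, V.updateRow f (Function.update (V f) k t) i j * W i j)
      (W f k) x := by
  refine (HasDerivAt.fun_sum fun i _ =>
    hasDerivAt_rowSum_updateRow_update V f k x (W i) i).congr_deriv ?_
  simp

end UpdateEntry

theorem HasDerivAt.log_one_add_of_inv_eq {y : ℝ → ℝ} {y' x ρ : ℝ} (hy : HasDerivAt y y' x)
    (hρ : ρ = (1 + y x)⁻¹) (hρ0 : ρ ≠ 0) :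
    HasDerivAt (fun t => Real.log (1 + y t)) (y' * ρ) x := by
  have hne : 1 + y x ≠ 0 := fun h => hρ0 (by rw [hρ, h, _root_.inv_zero])
  simpa [hρ, div_eq_mul_inv] using (hy.const_add 1).log hne

theorem partial_derivative_in_V_general
    (F K : ℕ) (σ2 : ℝ)
    (a : Fin K → ℝ)
    (V : Matrix (Fin F) (Fin K) ℝ)
    (r : Fin F → ℝ) (rt : Fin K → ℝ)
    (hr : ∀ f, 0 < r f) (hrt : ∀ k, 0 < rt k)
    (hfp : IsFP σ2 a V r rt) :
    ∀ (f : Fin F) (k : Fin K),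
      HasDerivAt
        (fun t => detEMIbar σ2 a (V.updateRow f (Function.update (V f) k t)) r rt)
        ((σ2 * F)⁻¹ * (a k) ^ 2 * rt k * r f) (V f k) := by
  intro f k
  obtain ⟨hr_eq, hrt_eq⟩ := hfp
  have hV : V.updateRow f (Function.update (V f) k (V f k)) = V := by simp
  have hcol : ∀ j, HasDerivAt
      (fun t => Real.log (1 + a j ^ 2 / σ2 *
        ∑ i, V.updateRow f (Function.update (V f) k t) i j * r i))
      (a j ^ 2 / σ2 * (if j = k then r f else 0) * rt j) (V f k) := fun j =>
    ((hasDerivAt_colSum_updateRow_update V f k _ r j).const_mul _).log_one_add_of_inv_eq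
      (by simpa only [hV] using hrt_eq j) (hrt j).ne'
  have hrow : ∀ i, HasDerivAt
      (fun t => Real.log (1 + σ2⁻¹ *
        ∑ j, V.updateRow f (Function.update (V f) k t) i j * a j ^ 2 * rt j))
      (σ2⁻¹ * (if i = f then a k ^ 2 * rt k else 0) * r i) (V f k) := fun i => by
    have h := ((hasDerivAt_rowSum_updateRow_update V f k (V f k) (fun j => a j ^ 2 * rt j)
      i).const_mul σ2⁻¹).log_one_add_of_inv_eq (by simpa only [hV, mul_assoc] using hr_eq i)
      (hr i).ne'
    simpa only [mul_assoc] using h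
  have hcross : HasDerivAt
      (fun t => ∑ i, ∑ j, V.updateRow f (Function.update (V f) k t) i j * a j ^ 2 * r i * rt j)
      (a k ^ 2 * r f * rt k) (V f k) := by
    have h := hasDerivAt_totalSum_updateRow_update V f k (V f k)
      (fun i j => a j ^ 2 * r i * rt j)
    simp only [mul_assoc] at h ⊢
    exact h
  refine ((((HasDerivAt.fun_sum fun j _ => hcol j).const_mul (F : ℝ)⁻¹).add
    ((HasDerivAt.fun_sum fun i _ => hrow i).const_mul (F : ℝ)⁻¹)).sub
    (hcross.const_mul (σ2 * F)⁻¹)).congr_deriv ?_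
  simp only [mul_ite, mul_zero, ite_mul, zero_mul, Finset.sum_ite_eq', Finset.mem_univ,
    if_true, _root_.mul_inv_rev]
  ring

/-- with `(r, r̃)` held constant and satisfying the fixed-point system
associated with `V`, the partial derivative of `G̃(V) = G(V, r, r̃)` with respect to the
entry `v_{f,k}`, evaluated at `V`, equals `(1/(σ²F))·a_k²·r̃_k·r_f`. -/
theorem partial_derivative_in_V
    (F K : ℕ) (σ2 : ℝ) (hσ : 0 < σ2)
    (a : Fin K → ℝ) (ha : ∀ k, 0 < a k)
    (V : Matrix (Fin F) (Fin K) ℝ) (hV : ∀ f k, 0 ≤ V f k)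
    (r : Fin F → ℝ) (rt : Fin K → ℝ)
    (hr : ∀ f, 0 < r f) (hrt : ∀ k, 0 < rt k)
    (hfp : IsFP σ2 a V r rt) :
    ∀ (f : Fin F) (k : Fin K),
      HasDerivAt
        (fun t => detEMIbar σ2 a (V.updateRow f (Function.update (V f) k t)) r rt)
        ((σ2 * F)⁻¹ * (a k) ^ 2 * rt k * r f) (V f k) :=
  partial_derivative_in_V_general F K σ2 a V r rt hr hrt hfp
end

section
/- Let M ∈ ℂ^{F×F} be a Hermitian positive semidefinite matrix. For every σ² > 0, (1/F)·log det(I_F + (σ²)^{-1} M) = ∫_{σ²}^{∞} ( 1/z − (1/(zF))·Tr[(I_F + z^{-1} M)^{-1}] ) dz, the integrand being nonnegative and integrable on (σ², ∞). -/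
/-!
Diagonalise `M` with eigenvalues `λᵢ ≥ 0`: then `det (1 + z⁻¹ • M) = ∏ᵢ (1 + λᵢ / z)` and
`Tr (1 + z⁻¹ • M)⁻¹ = ∑ᵢ z / (z + λᵢ)` (both are values of the functional calculus of `M`),
so the integrand is `F⁻¹ ∑ᵢ (1 / z - 1 / (z + λᵢ))`. Each summand is nonnegative with
antiderivative `log z - log (z + λᵢ)`, which tends to `0` at infinity, so its integral over
`(σ², ∞)` is `log (1 + λᵢ / σ²)`.
-/

open Filter MeasureTheory Matrix Real Set Topology
open scoped ComplexOrder

section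

variable {a t : ℝ}

theorem hasDerivAt_log_sub_log_add {x : ℝ} (hx : 0 < x) (hxt : 0 < x + t) :
    HasDerivAt (fun z => log z - log (z + t)) (x⁻¹ - (x + t)⁻¹) x :=
  (hasDerivAt_log hx.ne').sub (by simpa using ((hasDerivAt_id x).add_const t).log hxt.ne')

theorem tendsto_log_sub_log_add_atTop (t : ℝ) :
    Tendsto (fun z => log z - log (z + t)) atTop (𝓝 0) := by
  simpa using (tendsto_log_comp_add_sub_log t).neg

theorem inv_sub_inv_add_nonneg {x : ℝ} (hx : 0 < x) (ht : 0 ≤ t) : 0 ≤ x⁻¹ - (x + t)⁻¹ :=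
  sub_nonneg.2 (inv_anti₀ hx (le_add_of_nonneg_right ht))

theorem integrableOn_Ioi_inv_sub_inv_add (ha : 0 < a) (ht : 0 ≤ t) :
    IntegrableOn (fun z => z⁻¹ - (z + t)⁻¹) (Ioi a) :=
  integrableOn_Ioi_deriv_of_nonneg'
    (fun x hx => hasDerivAt_log_sub_log_add (ha.trans_le hx) (by linarith [mem_Ici.1 hx]))
    (fun x hx => inv_sub_inv_add_nonneg (ha.trans hx) ht) (tendsto_log_sub_log_add_atTop t)

theorem integral_Ioi_inv_sub_inv_add (ha : 0 < a) (ht : 0 ≤ t) :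
    ∫ z in Ioi a, (z⁻¹ - (z + t)⁻¹) = log (1 + a⁻¹ * t) := by
  rw [integral_Ioi_of_hasDerivAt_of_nonneg'
    (fun x hx => hasDerivAt_log_sub_log_add (ha.trans_le hx) (by linarith [mem_Ici.1 hx]))
    (fun x hx => inv_sub_inv_add_nonneg (ha.trans hx) ht) (tendsto_log_sub_log_add_atTop t),
    show 1 + a⁻¹ * t = (a + t) / a by field_simp, log_div (by positivity) ha.ne']
  ring

end

namespace Matrix.IsHermitian

variable {𝕜 n : Type*} [RCLike 𝕜] [Fintype n] [DecidableEq n] {A : Matrix n n 𝕜}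

theorem trace_cfc (hA : A.IsHermitian) (f : ℝ → ℝ) :
    (cfc f A).trace = ∑ i, (f (hA.eigenvalues i) : 𝕜) := by
  rw [hA.cfc_eq, IsHermitian.cfc, Unitary.conjStarAlgAut_apply, trace_mul_cycle,
    Unitary.coe_star_mul_self, one_mul, trace_diagonal]
  rfl

theorem det_cfc (hA : A.IsHermitian) (f : ℝ → ℝ) :
    (cfc f A).det = ∏ i, (f (hA.eigenvalues i) : 𝕜) := by
  rw [hA.cfc_eq, IsHermitian.cfc, Unitary.conjStarAlgAut_apply, det_mul_comm, ← mul_assoc,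
    Unitary.coe_star_mul_self, one_mul, det_diagonal]
  rfl

theorem one_add_smul_eq_cfc (hA : A.IsHermitian) (c : ℝ) :
    1 + c • A = cfc (fun x => 1 + c * x) A := by
  rw [cfc_const_add 1 (c * ·) A, cfc_const_mul_id c A, map_one]

theorem inv_one_add_smul_eq_cfc (hA : A.IsHermitian) {c : ℝ}
    (hc : ∀ i, 1 + c * hA.eigenvalues i ≠ 0) :
    (1 + c • A)⁻¹ = cfc (fun x => (1 + c * x)⁻¹) A := by
  rw [cfc_inv (fun x => 1 + c * x) A, ← hA.one_add_smul_eq_cfc, nonsing_inv_eq_ringInverse]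
  rw [hA.spectrum_real_eq_range_eigenvalues]
  rintro _ ⟨i, rfl⟩
  exact hc i

theorem det_one_add_smul (hA : A.IsHermitian) (c : ℝ) :
    (1 + c • A).det = ((∏ i, (1 + c * hA.eigenvalues i) : ℝ) : 𝕜) := by
  rw [hA.one_add_smul_eq_cfc, hA.det_cfc, RCLike.ofReal_prod]

theorem trace_inv_one_add_smul (hA : A.IsHermitian) {c : ℝ}
    (hc : ∀ i, 1 + c * hA.eigenvalues i ≠ 0) :
    (1 + c • A)⁻¹.trace = ((∑ i, (1 + c * hA.eigenvalues i)⁻¹ : ℝ) : 𝕜) := by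
  rw [hA.inv_one_add_smul_eq_cfc hc, hA.trace_cfc, RCLike.ofReal_sum]

end Matrix.IsHermitian

namespace Matrix.PosSemidef

variable {𝕜 n : Type*} [RCLike 𝕜] [Fintype n] [DecidableEq n] {A : Matrix n n 𝕜}

theorem one_add_mul_eigenvalues_pos (hA : A.PosSemidef) {c : ℝ} (hc : 0 ≤ c) (i : n) :
    0 < 1 + c * hA.1.eigenvalues i :=
  add_pos_of_pos_of_nonneg one_pos (mul_nonneg hc (hA.eigenvalues_nonneg i))

theorem log_re_det_one_add_smul (hA : A.PosSemidef) {c : ℝ} (hc : 0 ≤ c) :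
    log (RCLike.re (1 + c • A).det) = ∑ i, log (1 + c * hA.1.eigenvalues i) := by
  rw [hA.1.det_one_add_smul, RCLike.ofReal_re,
    log_prod fun i _ => (hA.one_add_mul_eigenvalues_pos hc i).ne']

theorem inv_sub_mul_re_trace_inv_one_add_smul (hA : A.PosSemidef) [Nonempty n] {z : ℝ}
    (hz : 0 < z) :
    z⁻¹ - (z * Fintype.card n)⁻¹ * RCLike.re (1 + z⁻¹ • A)⁻¹.trace =
      (Fintype.card n : ℝ)⁻¹ * ∑ i, (z⁻¹ - (z + hA.1.eigenvalues i)⁻¹) := by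
  have hN : (Fintype.card n : ℝ) ≠ 0 := Nat.cast_ne_zero.2 Fintype.card_ne_zero
  have hterm (i : n) : (Fintype.card n : ℝ)⁻¹ * (z⁻¹ - (z + hA.1.eigenvalues i)⁻¹) =
      (Fintype.card n : ℝ)⁻¹ * z⁻¹ -
        (z * Fintype.card n)⁻¹ * (1 + z⁻¹ * hA.1.eigenvalues i)⁻¹ := by
    have hev := hA.eigenvalues_nonneg i
    field_simp
  rw [hA.1.trace_inv_one_add_smul
      fun i => (hA.one_add_mul_eigenvalues_pos (inv_pos.2 hz).le i).ne',
    RCLike.ofReal_re, Finset.mul_sum, Finset.mul_sum, Finset.sum_congr rfl fun i _ => hterm i,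
    Finset.sum_sub_distrib, Finset.sum_const, Finset.card_univ, nsmul_eq_mul,
    mul_inv_cancel_left₀ hN]

end Matrix.PosSemidef

/-- the log-det as an integral of the trace term: the integrand is
nonnegative and integrable on `(σ²,∞)`, and
`(1/F)·log det(I + (σ²)⁻¹M) = ∫_{σ²}^∞ (1/z − (1/(zF))·Tr[(I + z⁻¹M)⁻¹]) dz`. -/
theorem logdet_integral_representation
    (F : ℕ) (hF : 1 ≤ F) (M : Matrix (Fin F) (Fin F) ℂ) (hM : M.PosSemidef)
    (σ2 : ℝ) (hσ : 0 < σ2) :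
    (∀ z ∈ Set.Ioi σ2, 0 ≤ z⁻¹ - (z * F)⁻¹ * ((1 + z⁻¹ • M)⁻¹.trace).re) ∧
    IntegrableOn (fun z : ℝ => z⁻¹ - (z * F)⁻¹ * ((1 + z⁻¹ • M)⁻¹.trace).re)
      (Set.Ioi σ2) ∧
    (F : ℝ)⁻¹ * Real.log ((1 + σ2⁻¹ • M).det.re) =
      ∫ z in Set.Ioi σ2, (z⁻¹ - (z * F)⁻¹ * ((1 + z⁻¹ • M)⁻¹.trace).re) := by
  have : NeZero F := ⟨by omega⟩
  set ev := hM.1.eigenvalues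
  have heq : EqOn (fun z : ℝ => z⁻¹ - (z * F)⁻¹ * ((1 + z⁻¹ • M)⁻¹.trace).re)
      (fun z => (F : ℝ)⁻¹ * ∑ i, (z⁻¹ - (z + ev i)⁻¹)) (Ioi σ2) := fun z hz => by
    simpa using hM.inv_sub_mul_re_trace_inv_one_add_smul (hσ.trans hz)
  have hint (i : Fin F) : IntegrableOn (fun z => z⁻¹ - (z + ev i)⁻¹) (Ioi σ2) :=
    integrableOn_Ioi_inv_sub_inv_add hσ (hM.eigenvalues_nonneg i)
  have hnonneg (z : ℝ) (hz : z ∈ Ioi σ2) : 0 ≤ (F : ℝ)⁻¹ * ∑ i, (z⁻¹ - (z + ev i)⁻¹) :=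
    mul_nonneg (by positivity) (Finset.sum_nonneg fun i _ =>
      inv_sub_inv_add_nonneg (hσ.trans hz) (hM.eigenvalues_nonneg i))
  refine ⟨fun z hz => (hnonneg z hz).trans_eq (heq hz).symm,
    IntegrableOn.congr_fun ((integrable_finsetSum _ fun i _ => hint i).const_mul _) heq.symm
      measurableSet_Ioi, ?_⟩
  rw [setIntegral_congr_fun measurableSet_Ioi heq, integral_const_mul,
    integral_finsetSum _ fun i _ => hint i, ← RCLike.re_to_complex,
    hM.log_re_det_one_add_smul (inv_pos.2 hσ).le]
  exact congrArg _ (Finset.sum_congr rfl fun i _ =>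
    (integral_Ioi_inv_sub_inv_add hσ (hM.eigenvalues_nonneg i)).symm)
end
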